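/- arXiv:1107.4527 — 6 statements merged into one kernel-verified Lean document; each statement's English description precedes it below -/
import Mathlib

section
/- For every p ≥ q ≥ 1, the incomplete Gamma integral satisfies ∫_p^∞ t^{q-1} e^{-t} dt ≤ e^{-p} p^q. -/
open MeasureTheory Real Set

/-
Since `x ≤ exp (x - 1)`, on `t > p` we have `t ^ r = p ^ r (t / p) ^ r ≤ p ^ r exp (r (t / p - 1))`,
so for `0 ≤ r < p` the integrand `t ^ r e ^ (-t)` is dominated by an exponential of rate
`1 - r / p > 0`. Integrating it gives `∫_p^∞ t ^ r e ^ (-t) dt ≤ p ^ (r + 1) e ^ (-p) / (p - r)`;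
with `r = q - 1` the denominator `p - q + 1` is at least `1`.
-/

lemma rpow_le_exp_mul_sub_one {x r : ℝ} (hx : 0 ≤ x) (hr : 0 ≤ r) :
    x ^ r ≤ exp (r * (x - 1)) := by
  calc x ^ r ≤ exp (x - 1) ^ r := by
        gcongr
        linarith [add_one_le_exp (x - 1)]
    _ = exp (r * (x - 1)) := by rw [← exp_mul, mul_comm]

lemma rpow_mul_exp_neg_le {p r t : ℝ} (hp : 0 < p) (hr : 0 ≤ r) (ht : 0 ≤ t) :
    t ^ r * exp (-t) ≤ p ^ r * exp (-r) * exp ((r / p - 1) * t) := by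
  have hpow : t ^ r ≤ p ^ r * exp (r * (t / p - 1)) := by
    calc t ^ r = p ^ r * (t / p) ^ r := by
          rw [div_rpow ht hp.le, mul_div_cancel₀ _ (rpow_pos_of_pos hp r).ne']
      _ ≤ p ^ r * exp (r * (t / p - 1)) := by
          gcongr
          exact rpow_le_exp_mul_sub_one (div_nonneg ht hp.le) hr
  calc t ^ r * exp (-t) ≤ p ^ r * exp (r * (t / p - 1)) * exp (-t) := by gcongr
    _ = p ^ r * exp (-r) * exp ((r / p - 1) * t) := by
        rw [mul_assoc, ← exp_add, mul_assoc, ← exp_add]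
        ring_nf

theorem integral_Ioi_rpow_mul_exp_neg_le {p r : ℝ} (hr : 0 ≤ r) (hrp : r < p) :
    ∫ t in Ioi p, t ^ r * exp (-t) ≤ p ^ (r + 1) * exp (-p) / (p - r) := by
  have hp : 0 < p := hr.trans_lt hrp
  have hrate : r / p - 1 < 0 := by rw [sub_neg, div_lt_one hp]; exact hrp
  have hle : ∫ t in Ioi p, t ^ r * exp (-t)
      ≤ ∫ t in Ioi p, p ^ r * exp (-r) * exp ((r / p - 1) * t) := by
    refine integral_mono_of_nonneg ?_ ((integrableOn_exp_mul_Ioi hrate p).const_mul _) ?_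
    · filter_upwards [ae_restrict_mem measurableSet_Ioi] with t ht
      exact mul_nonneg (rpow_nonneg (hp.trans ht).le _) (exp_pos _).le
    · filter_upwards [ae_restrict_mem measurableSet_Ioi] with t ht
      exact rpow_mul_exp_neg_le hp hr (hp.trans ht).le
  refine hle.trans_eq ?_
  rw [integral_const_mul, integral_exp_mul_Ioi hrate, rpow_add_one hp.ne',
    div_sub_one hp.ne', div_mul_cancel₀ _ hp.ne']
  field_simp
  rw [← exp_add, show -r + (r - p) = -p by ring, ← div_neg, neg_sub]

/-- For every `p ≥ q ≥ 1`, the incomplete Gamma integral satisfies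
`∫_p^∞ t^(q-1) e^(-t) dt ≤ e^(-p) p^q`. -/
theorem stmt0 (p q : ℝ) (hq : 1 ≤ q) (hpq : q ≤ p) :
    ∫ t in Set.Ioi p, t ^ (q - 1) * Real.exp (-t) ≤ Real.exp (-p) * p ^ q := by
  have hbound := integral_Ioi_rpow_mul_exp_neg_le (sub_nonneg.mpr hq) (by linarith : q - 1 < p)
  rw [sub_add_cancel] at hbound
  have hp : 0 < p := by linarith
  refine hbound.trans ?_
  rw [mul_comm]
  exact div_le_self (by positivity) (by linarith)
end

section
/- Let K be a convex body of volume 1 in ℝ^n, let z_1, …, z_N ∈ ℝ^n, let q ≥ 1 and p ≥ max{log N, q}. Then (∫_K max_{1≤i≤N} |⟨x, z_i⟩|^q dx)^{1/q} ≤ 3e^3 · max_{1≤i≤N} h_{Z_p(K)}(z_i), where h_{Z_p(K)}(z) = (∫_K |⟨x,z⟩|^p dx)^{1/p}. -/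
open MeasureTheory
open scoped RealInnerProductSpace

/-!
On a probability space the `L^q` norm increases with `q`, so it suffices to treat the exponent
`p`. There the `p`-th power of a maximum of `N` nonnegative functions is at most the sum of their
`p`-th powers, so the `L^p` norm of the maximum is at most `N ^ (1 / p)` times the largest
`L^p` norm, and `N ^ (1 / p) ≤ e` because `p ≥ log N`.
-/

namespace Real

lemma iSup_rpow_le_sum_rpow {ι : Type*} [Fintype ι] {a : ι → ℝ} (ha : ∀ i, 0 ≤ a i)
    {p : ℝ} (hp : 0 < p) : (⨆ i, a i) ^ p ≤ ∑ i, a i ^ p := by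
  cases isEmpty_or_nonempty ι
  · simp [zero_rpow hp.ne']
  · obtain ⟨i, hi⟩ := Finite.exists_max a
    calc (⨆ i, a i) ^ p ≤ a i ^ p := rpow_le_rpow (iSup_nonneg ha) (ciSup_le hi) hp.le
      _ ≤ ∑ i, a i ^ p :=
        Finset.single_le_sum (fun j _ ↦ rpow_nonneg (ha j) p) (Finset.mem_univ i)

lemma rpow_one_div_le_exp_one_of_log_le {x p : ℝ} (hx : 0 ≤ x) (hp : 0 < p)
    (hxp : log x ≤ p) : x ^ (1 / p) ≤ exp 1 := by
  rcases hx.eq_or_lt with rfl | hx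
  · rw [zero_rpow (by positivity)]
    positivity
  · rw [rpow_def_of_pos hx, exp_le_exp, mul_one_div, div_le_one hp]
    exact hxp

end Real

section Moments

variable {α : Type*} [MeasurableSpace α] {μ : Measure α}

lemma integral_rpow_rpow_one_div_le_of_le [IsProbabilityMeasure μ] {f : α → ℝ}
    (hf_nonneg : ∀ x, 0 ≤ f x) (hf : AEStronglyMeasurable f μ)
    {q p : ℝ} (hfp : Integrable (fun x ↦ f x ^ p) μ) (hq : 0 < q) (hqp : q ≤ p) :
    (∫ x, f x ^ q ∂μ) ^ (1 / q) ≤ (∫ x, f x ^ p ∂μ) ^ (1 / p) := by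
  have hp : 0 < p := hq.trans_le hqp
  have hnorm : ∀ r : ℝ, (fun x ↦ ‖f x‖ ^ r) = fun x ↦ f x ^ r := fun r ↦
    funext fun x ↦ by rw [Real.norm_of_nonneg (hf_nonneg x)]
  have hfp' : MemLp f (ENNReal.ofReal p) μ := by
    refine (integrable_norm_rpow_iff hf (by simpa using hp) ENNReal.ofReal_ne_top).1 ?_
    rwa [ENNReal.toReal_ofReal hp.le, hnorm]
  have hfq' : MemLp f (ENNReal.ofReal q) μ := hfp'.mono_exponent (ENNReal.ofReal_le_ofReal hqp)
  have h := eLpNorm_le_eLpNorm_of_exponent_le (μ := μ) (ENNReal.ofReal_le_ofReal hqp) hf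
  rw [hfq'.eLpNorm_eq_integral_rpow_norm (by simpa using hq) ENNReal.ofReal_ne_top,
    hfp'.eLpNorm_eq_integral_rpow_norm (by simpa using hp) ENNReal.ofReal_ne_top,
    ENNReal.toReal_ofReal hq.le, ENNReal.toReal_ofReal hp.le, hnorm, hnorm,
    ENNReal.ofReal_le_ofReal_iff
      (Real.rpow_nonneg (integral_nonneg fun x ↦ Real.rpow_nonneg (hf_nonneg x) p) _)] at h
  simpa only [one_div] using h

variable {ι : Type*} [Fintype ι] {g : ι → α → ℝ} {p : ℝ}

lemma integrable_iSup_rpow (hg_nonneg : ∀ i x, 0 ≤ g i x)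
    (hg : AEStronglyMeasurable (fun x ↦ ⨆ i, g i x) μ)
    (hgp : ∀ i, Integrable (fun x ↦ g i x ^ p) μ) (hp : 0 < p) :
    Integrable (fun x ↦ (⨆ i, g i x) ^ p) μ := by
  refine (integrable_finsetSum Finset.univ fun i _ ↦ hgp i).mono'
    (hg.aemeasurable.pow_const p).aestronglyMeasurable (Filter.Eventually.of_forall fun x ↦ ?_)
  rw [Real.norm_of_nonneg (Real.rpow_nonneg (Real.iSup_nonneg (hg_nonneg · x)) p)]
  exact Real.iSup_rpow_le_sum_rpow (hg_nonneg · x) hp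

lemma integral_iSup_rpow_rpow_one_div_le (hg_nonneg : ∀ i x, 0 ≤ g i x)
    (hgp : ∀ i, Integrable (fun x ↦ g i x ^ p) μ) (hp : 0 < p) :
    (∫ x, (⨆ i, g i x) ^ p ∂μ) ^ (1 / p)
      ≤ (Fintype.card ι : ℝ) ^ (1 / p) * ⨆ i, (∫ x, g i x ^ p ∂μ) ^ (1 / p) := by
  set M := ⨆ i, (∫ x, g i x ^ p ∂μ) ^ (1 / p)
  have hint_nonneg : ∀ i, 0 ≤ ∫ x, g i x ^ p ∂μ :=
    fun i ↦ integral_nonneg fun x ↦ Real.rpow_nonneg (hg_nonneg i x) p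
  have hM : 0 ≤ M := Real.iSup_nonneg fun i ↦ Real.rpow_nonneg (hint_nonneg i) _
  have hle_M : ∀ i, ∫ x, g i x ^ p ∂μ ≤ M ^ p := fun i ↦ by
    calc ∫ x, g i x ^ p ∂μ = ((∫ x, g i x ^ p ∂μ) ^ (1 / p)) ^ p := by
          rw [one_div, Real.rpow_inv_rpow (hint_nonneg i) hp.ne']
      _ ≤ M ^ p := Real.rpow_le_rpow (Real.rpow_nonneg (hint_nonneg i) _)
          (le_ciSup (Finite.bddAbove_range (fun i ↦ (∫ x, g i x ^ p ∂μ) ^ (1 / p))) i) hp.le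
  have hbound : ∫ x, (⨆ i, g i x) ^ p ∂μ ≤ Fintype.card ι * M ^ p :=
    calc ∫ x, (⨆ i, g i x) ^ p ∂μ ≤ ∫ x, ∑ i, g i x ^ p ∂μ :=
          integral_mono_of_nonneg
            (Filter.Eventually.of_forall fun x ↦
              Real.rpow_nonneg (Real.iSup_nonneg (hg_nonneg · x)) p)
            (integrable_finsetSum Finset.univ fun i _ ↦ hgp i)
            (Filter.Eventually.of_forall fun x ↦ Real.iSup_rpow_le_sum_rpow (hg_nonneg · x) hp)
      _ = ∑ i, ∫ x, g i x ^ p ∂μ := integral_finsetSum _ fun i _ ↦ hgp i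
      _ ≤ ∑ _i : ι, M ^ p := Finset.sum_le_sum fun i _ ↦ hle_M i
      _ = Fintype.card ι * M ^ p := by simp
  calc (∫ x, (⨆ i, g i x) ^ p ∂μ) ^ (1 / p)
      ≤ (Fintype.card ι * M ^ p) ^ (1 / p) :=
        Real.rpow_le_rpow (integral_nonneg fun x ↦
          Real.rpow_nonneg (Real.iSup_nonneg (hg_nonneg · x)) p) hbound (by positivity)
    _ = (Fintype.card ι : ℝ) ^ (1 / p) * M := by
        rw [Real.mul_rpow (by positivity) (by positivity), one_div,
          Real.rpow_rpow_inv hM hp.ne']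

end Moments

theorem stmt1_general (n N : ℕ) (K : Set (EuclideanSpace ℝ (Fin n)))
    (hKcomp : IsCompact K) (hKvol : volume K = 1) (z : Fin N → EuclideanSpace ℝ (Fin n))
    (q p : ℝ) (hq : 1 ≤ q) (hpN : Real.log N ≤ p) (hpq : q ≤ p) :
    (∫ x in K, (⨆ i, |⟪x, z i⟫|) ^ q) ^ (1 / q)
      ≤ 3 * Real.exp 3 * ⨆ i, (∫ x in K, |⟪x, z i⟫| ^ p) ^ (1 / p) := by
  have : IsProbabilityMeasure (volume.restrict K) := ⟨by simpa using hKvol⟩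
  have hp : 0 < p := by linarith
  have hcont : ∀ i, Continuous fun x : EuclideanSpace ℝ (Fin n) ↦ |⟪x, z i⟫| := by fun_prop
  have hint : ∀ i, Integrable (fun x ↦ |⟪x, z i⟫| ^ p) (volume.restrict K) := fun i ↦
    ((hcont i).rpow_const fun _ ↦ Or.inr hp.le).continuousOn.integrableOn_compact hKcomp
  have hmeas : Measurable fun x ↦ ⨆ i, |⟪x, z i⟫| := Measurable.iSup fun i ↦ (hcont i).measurable
  set M := ⨆ i, (∫ x in K, |⟪x, z i⟫| ^ p) ^ (1 / p)
  have hM : 0 ≤ M := Real.iSup_nonneg fun i ↦ by positivity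
  calc (∫ x in K, (⨆ i, |⟪x, z i⟫|) ^ q) ^ (1 / q)
      ≤ (∫ x in K, (⨆ i, |⟪x, z i⟫|) ^ p) ^ (1 / p) :=
        integral_rpow_rpow_one_div_le_of_le (fun x ↦ Real.iSup_nonneg fun i ↦ abs_nonneg _)
          hmeas.aestronglyMeasurable
          (integrable_iSup_rpow (fun _ _ ↦ abs_nonneg _) hmeas.aestronglyMeasurable hint hp)
          (by linarith) hpq
    _ ≤ (N : ℝ) ^ (1 / p) * M := by
        have := integral_iSup_rpow_rpow_one_div_le (fun _ _ ↦ abs_nonneg _) hint hp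
        rwa [Fintype.card_fin] at this
    _ ≤ Real.exp 1 * M := by
        gcongr
        exact Real.rpow_one_div_le_exp_one_of_log_le N.cast_nonneg hp hpN
    _ ≤ 3 * Real.exp 3 * M := by
        gcongr
        nlinarith [Real.exp_le_exp.mpr (show (1 : ℝ) ≤ 3 by norm_num), Real.exp_pos 3]

/-- Let `K` be a convex body of volume 1 in `ℝⁿ`, `z₁, …, z_N ∈ ℝⁿ`, `q ≥ 1` and
`p ≥ max {log N, q}`. Then
`(∫_K max_i |⟨x, zᵢ⟩|^q dx)^(1/q) ≤ 3e³ · max_i h_{Z_p(K)}(zᵢ)`,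
where `h_{Z_p(K)}(z) = (∫_K |⟨x,z⟩|^p dx)^(1/p)`. -/
theorem stmt1 (n N : ℕ) (hN : 0 < N) (K : Set (EuclideanSpace ℝ (Fin n)))
    (hKcomp : IsCompact K) (hKconv : Convex ℝ K) (hKint : (interior K).Nonempty)
    (hKvol : volume K = 1) (z : Fin N → EuclideanSpace ℝ (Fin n))
    (q p : ℝ) (hq : 1 ≤ q) (hpN : Real.log N ≤ p) (hpq : q ≤ p) :
    (∫ x in K, (⨆ i, |⟪x, z i⟫|) ^ q) ^ (1 / q)
      ≤ 3 * Real.exp 3 * ⨆ i, (∫ x in K, |⟪x, z i⟫| ^ p) ^ (1 / p) :=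
  stmt1_general n N K hKcomp hKvol z q p hq hpN hpq
end

section
/- Let K be a convex body of volume 1 in ℝ^n and let 1 ≤ r ≤ n. If A ⊆ K is measurable with |A| ≥ 2^{-r/2}, then for every p with r ≤ p ≤ n and every θ ∈ S^{n-1}, h_{Z_p(Ā)}(θ) ≤ 2 h_{Z_p(K)}(θ), where Ā = |A|^{-1/n} A is the homothet of A of volume 1. -/
/-!
Dilating a set by `c > 0` multiplies `∫ |⟪x, θ⟫|^p` by `c^(n+p)`, so
`h_{Z_p(Ā)}(θ) = |A|^(-(n+p)/(np)) h_{Z_p(A)}(θ)`, while `h_{Z_p(A)} ≤ h_{Z_p(K)}` as `A ⊆ K`.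
From `|A| ≥ 2^(-r/2)` the dilation factor is at most `2^(r/(2n) + r/(2p))`, which is at most `2`
because `r ≤ n` and `r ≤ p`.
-/

open MeasureTheory
open scoped RealInnerProductSpace Pointwise

variable {E : Type*} [NormedAddCommGroup E] [InnerProductSpace ℝ E] [MeasureSpace E]

/-- The support function `h_{Z_p(S)}(θ)`, without the normalisation `|S| = 1`. -/
noncomputable def lpCentroidSupport (S : Set E) (p : ℝ) (θ : E) : ℝ :=
  (∫ x in S, |⟪x, θ⟫| ^ p) ^ (1 / p)

theorem lpCentroidSupport_nonneg (S : Set E) (p : ℝ) (θ : E) : 0 ≤ lpCentroidSupport S p θ :=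
  Real.rpow_nonneg (integral_nonneg fun _ => Real.rpow_nonneg (abs_nonneg _) _) _

theorem lpCentroidSupport_smul [FiniteDimensional ℝ E] [BorelSpace E]
    [(volume : Measure E).IsAddHaarMeasure] (S : Set E) (p : ℝ) (θ : E) {c : ℝ} (hc : 0 < c) :
    lpCentroidSupport (c • S) p θ
      = c ^ ((Module.finrank ℝ E + p) * (1 / p)) * lpCentroidSupport S p θ := by
  have hhom : ∀ x : E, |⟪c • x, θ⟫| ^ p = c ^ p * |⟪x, θ⟫| ^ p := fun x => by
    rw [real_inner_smul_left, abs_mul, abs_of_pos hc, Real.mul_rpow hc.le (abs_nonneg _)]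
  have hcov := Measure.setIntegral_comp_smul_of_pos volume (fun x : E => |⟪x, θ⟫| ^ p) S hc
  simp only [hhom, integral_const_mul, smul_eq_mul] at hcov
  have hint : ∫ x in c • S, |⟪x, θ⟫| ^ p
      = c ^ ((Module.finrank ℝ E : ℝ) + p) * ∫ x in S, |⟪x, θ⟫| ^ p := by
    rw [Real.rpow_add hc, Real.rpow_natCast, mul_assoc, hcov]
    field_simp
  have hnonneg : 0 ≤ ∫ x in S, |⟪x, θ⟫| ^ p :=
    integral_nonneg fun x => Real.rpow_nonneg (abs_nonneg _) _
  rw [lpCentroidSupport, lpCentroidSupport, hint,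
    Real.mul_rpow (Real.rpow_nonneg hc.le _) hnonneg, ← Real.rpow_mul hc.le]

theorem lpCentroidSupport_mono [OpensMeasurableSpace E]
    [IsFiniteMeasureOnCompacts (volume : Measure E)] {S T : Set E} (hST : S ⊆ T)
    (hT : IsCompact T) {p : ℝ} (hp : 0 ≤ p) (θ : E) :
    lpCentroidSupport S p θ ≤ lpCentroidSupport T p θ := by
  have hcont : Continuous fun x : E => |⟪x, θ⟫| ^ p :=
    (Real.continuous_rpow_const hp).comp (continuous_id.inner continuous_const).abs
  have hnonneg : ∀ x : E, 0 ≤ |⟪x, θ⟫| ^ p := fun x => Real.rpow_nonneg (abs_nonneg _) _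
  refine Real.rpow_le_rpow (integral_nonneg hnonneg) ?_ (by positivity)
  exact setIntegral_mono_set (hcont.continuousOn.integrableOn_compact hT)
    (Filter.Eventually.of_forall hnonneg) hST.eventuallyLE

theorem rpow_neg_inv_rpow_le_two {a n p r : ℝ} (hn : 0 < n) (hp : 0 < p) (hrn : r ≤ n)
    (hrp : r ≤ p) (ha : (2 : ℝ) ^ (-(r / 2)) ≤ a) :
    (a ^ (-1 / n)) ^ ((n + p) * (1 / p)) ≤ 2 := by
  have h2r : 0 < (2 : ℝ) ^ (-(r / 2)) := by positivity
  have hexp : -1 / n * ((n + p) * (1 / p)) ≤ 0 := by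
    rw [neg_div, neg_mul]
    exact neg_nonpos.2 (by positivity)
  have hr : -(r / 2) * (-1 / n * ((n + p) * (1 / p))) ≤ 1 := by
    have key : -(r / 2) * (-1 / n * ((n + p) * (1 / p))) = r / n / 2 + r / p / 2 := by
      field_simp
      ring
    rw [key]
    linarith [(div_le_one hn).2 hrn, (div_le_one hp).2 hrp]
  calc (a ^ (-1 / n)) ^ ((n + p) * (1 / p))
      = a ^ (-1 / n * ((n + p) * (1 / p))) := (Real.rpow_mul (h2r.le.trans ha) _ _).symm
    _ ≤ ((2 : ℝ) ^ (-(r / 2))) ^ (-1 / n * ((n + p) * (1 / p))) :=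
      Real.rpow_le_rpow_of_nonpos h2r ha hexp
    _ = (2 : ℝ) ^ (-(r / 2) * (-1 / n * ((n + p) * (1 / p)))) := by
      rw [← Real.rpow_mul zero_le_two]
    _ ≤ 2 := Real.rpow_le_self_of_one_le one_le_two hr

theorem stmt3_general (n : ℕ) (K A : Set (EuclideanSpace ℝ (Fin n)))
    (hKcomp : IsCompact K) (hAK : A ⊆ K)
    (r : ℝ) (hr1 : 1 ≤ r) (hrn : r ≤ n)
    (hAvol : ENNReal.ofReal ((2 : ℝ) ^ (-(r / 2))) ≤ volume A)
    (p : ℝ) (hrp : r ≤ p)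
    (θ : EuclideanSpace ℝ (Fin n)) :
    (∫ x in ((volume A).toReal ^ (-(1 : ℝ) / n)) • A, |⟪x, θ⟫| ^ p) ^ (1 / p)
      ≤ 2 * (∫ x in K, |⟪x, θ⟫| ^ p) ^ (1 / p) := by
  have hp : 0 < p := by linarith
  have hAfin : volume A ≠ ⊤ := (measure_mono hAK).trans_lt hKcomp.measure_lt_top |>.ne
  have ha : (2 : ℝ) ^ (-(r / 2)) ≤ (volume A).toReal :=
    (ENNReal.ofReal_le_iff_le_toReal hAfin).1 hAvol
  have hc : 0 < (volume A).toReal ^ (-(1 : ℝ) / n) :=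
    Real.rpow_pos_of_pos ((by positivity : (0 : ℝ) < 2 ^ (-(r / 2))).trans_le ha) _
  change lpCentroidSupport _ p θ ≤ 2 * lpCentroidSupport K p θ
  rw [lpCentroidSupport_smul A p θ hc, finrank_euclideanSpace_fin]
  exact mul_le_mul (rpow_neg_inv_rpow_le_two (by linarith) hp hrn hrp ha)
    (lpCentroidSupport_mono hAK hKcomp hp.le θ) (lpCentroidSupport_nonneg A p θ) zero_le_two

/-- Let `K` be a convex body of volume 1 in `ℝⁿ` and `1 ≤ r ≤ n`. If `A ⊆ K` is
measurable with `|A| ≥ 2^(-r/2)`, then for every `p` with `r ≤ p ≤ n` and every unit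
vector `θ`, `h_{Z_p(Ā)}(θ) ≤ 2 h_{Z_p(K)}(θ)`, where `Ā = |A|^(-1/n) • A`. -/
theorem stmt3 (n : ℕ) (K A : Set (EuclideanSpace ℝ (Fin n)))
    (hKcomp : IsCompact K) (hKconv : Convex ℝ K) (hKint : (interior K).Nonempty)
    (hKvol : volume K = 1) (hAK : A ⊆ K) (hAmeas : MeasurableSet A)
    (r : ℝ) (hr1 : 1 ≤ r) (hrn : r ≤ n)
    (hAvol : ENNReal.ofReal ((2 : ℝ) ^ (-(r / 2))) ≤ volume A)
    (p : ℝ) (hrp : r ≤ p) (hpn : p ≤ n)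
    (θ : EuclideanSpace ℝ (Fin n)) (hθ : ‖θ‖ = 1) :
    (∫ x in ((volume A).toReal ^ (-(1 : ℝ) / n)) • A, |⟪x, θ⟫| ^ p) ^ (1 / p)
      ≤ 2 * (∫ x in K, |⟪x, θ⟫| ^ p) ^ (1 / p) :=
  stmt3_general n K A hKcomp hAK r hr1 hrn hAvol p hrp θ
end

section
/- Suppose for a convex body K of volume 1 in ℝ^n, a subset A ⊆ K, a direction θ ∈ S^{n-1} and an exponent p ≥ 1 one has (∫_K |⟨x,θ⟩|^{2p} dx)^{1/(2p)} ≤ M (∫_K |⟨x,θ⟩|^p dx)^{1/p} for some M > 0, and |K \ A| ≤ (2M^p)^{-2}·(1/4). Then ∫_K |⟨x,θ⟩|^p dx ≤ 2 ∫_{Ā} |⟨x,θ⟩|^p dx, where Ā = |A|^{-1/n}A. -/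
open MeasureTheory
open scoped RealInnerProductSpace Pointwise

/-! Cauchy–Schwarz bounds `∫_{K \ A} f` for `f = |⟨x, θ⟩|^p` by `‖f‖_{L²(K)} |K \ A|^{1/2}`, and the
reverse Hölder hypothesis says `‖f‖_{L²(K)} ≤ M^p ∫_K f`; with the smallness of `|K \ A|` this is
at most `¼ ∫_K f`, so `∫_K f ≤ (4/3) ∫_A f`. As `|A| ≤ |K| = 1`, the factor `t = |A|^{-1/n}` is at
least `1`, and dilating by `t` multiplies the integral of the `p`-homogeneous `f` by `t^{n+p} ≥ 1`. -/

section

variable {α : Type*} [MeasurableSpace α] {μ : Measure α} {f : α → ℝ}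

theorem setIntegral_le_sqrt_setIntegral_sq_mul_sqrt_measureReal {s : Set α} (hs : μ s ≠ ⊤)
    (hf0 : 0 ≤ᵐ[μ.restrict s] f) (hf : MemLp f 2 (μ.restrict s)) :
    ∫ x in s, f x ∂μ ≤ √(∫ x in s, f x ^ 2 ∂μ) * √(μ.real s) := by
  have : IsFiniteMeasure (μ.restrict s) := isFiniteMeasure_restrict.2 hs
  have h := integral_mul_le_Lp_mul_Lq_of_nonneg Real.HolderConjugate.two_two hf0
    (ae_of_all _ fun _ => zero_le_one) (by simpa using hf) (memLp_const (1 : ℝ))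
  simpa [Real.sqrt_eq_rpow, Measure.real, Measure.restrict_apply_univ] using h

theorem setIntegral_le_two_mul_setIntegral_of_sqrt_le {K A : Set α} {C : ℝ} (hC : 0 < C)
    (hK : μ K ≠ ⊤) (hA : NullMeasurableSet A μ) (hAK : A ⊆ K) (hf0 : ∀ x, 0 ≤ f x)
    (hf : MemLp f 2 (μ.restrict K))
    (hRH : √(∫ x in K, f x ^ 2 ∂μ) ≤ C * ∫ x in K, f x ∂μ)
    (hsmall : μ.real (K \ A) ≤ (4 * C)⁻¹ ^ 2) :
    ∫ x in K, f x ∂μ ≤ 2 * ∫ x in A, f x ∂μ := by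
  have : IsFiniteMeasure (μ.restrict K) := isFiniteMeasure_restrict.2 hK
  have hdiff_fin : μ (K \ A) ≠ ⊤ := measure_ne_top_of_subset Set.sdiff_subset hK
  have hf_diff : MemLp f 2 (μ.restrict (K \ A)) :=
    hf.mono_measure (Measure.restrict_mono Set.sdiff_subset le_rfl)
  have hsq_mono : ∫ x in K \ A, f x ^ 2 ∂μ ≤ ∫ x in K, f x ^ 2 ∂μ :=
    setIntegral_mono_set hf.integrable_sq (ae_of_all _ fun x => sq_nonneg (f x))
      Set.sdiff_subset.eventuallyLE
  have hvol : √(μ.real (K \ A)) ≤ (4 * C)⁻¹ :=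
    Real.sqrt_le_iff.2 ⟨by positivity, hsmall⟩
  have hI0 : 0 ≤ ∫ x in K, f x ∂μ := integral_nonneg hf0
  have hquarter : ∫ x in K \ A, f x ∂μ ≤ (1 / 4) * ∫ x in K, f x ∂μ :=
    calc ∫ x in K \ A, f x ∂μ
        ≤ √(∫ x in K \ A, f x ^ 2 ∂μ) * √(μ.real (K \ A)) :=
          setIntegral_le_sqrt_setIntegral_sq_mul_sqrt_measureReal hdiff_fin
            (ae_of_all _ hf0) hf_diff
      _ ≤ (C * ∫ x in K, f x ∂μ) * (4 * C)⁻¹ :=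
          mul_le_mul ((Real.sqrt_le_sqrt hsq_mono).trans hRH) hvol (Real.sqrt_nonneg _)
            (by positivity)
      _ = (1 / 4) * ∫ x in K, f x ∂μ := by field_simp
  have hsplit := setIntegral_sdiff₀ hA (hf.integrable one_le_two) hAK
  linarith

end

theorem sqrt_le_rpow_mul_of_rpow_inv_two_mul_le {a b M p : ℝ} (ha : 0 ≤ a) (hb : 0 ≤ b)
    (hM : 0 ≤ M) (hp : 0 < p) (h : a ^ (1 / (2 * p)) ≤ M * b ^ (1 / p)) :
    √a ≤ M ^ p * b := by
  have h := Real.rpow_le_rpow (Real.rpow_nonneg ha _) h hp.le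
  rw [← Real.rpow_mul ha, Real.mul_rpow hM (Real.rpow_nonneg hb _), ← Real.rpow_mul hb,
    one_div_mul_cancel hp.ne', Real.rpow_one, one_div_mul_eq_div, div_mul_cancel_right₀ hp.ne'] at h
  rwa [Real.sqrt_eq_rpow, one_div]

theorem setIntegral_le_setIntegral_smul_of_homogeneous {E : Type*} [NormedAddCommGroup E]
    [NormedSpace ℝ E] [FiniteDimensional ℝ E] [MeasurableSpace E] [BorelSpace E]
    (μ : Measure E) [μ.IsAddHaarMeasure] {g : E → ℝ} {p t : ℝ} (hp : 0 ≤ p) (ht : 1 ≤ t)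
    (hg0 : ∀ x, 0 ≤ g x) (hg : ∀ x, g (t • x) = t ^ p * g x) (A : Set E) :
    ∫ x in A, g x ∂μ ≤ ∫ x in t • A, g x ∂μ := by
  have ht0 : 0 < t := zero_lt_one.trans_le ht
  have hscale := Measure.setIntegral_comp_smul_of_pos μ g A ht0
  simp only [hg, smul_eq_mul, integral_const_mul] at hscale
  have hfactor : 1 ≤ t ^ Module.finrank ℝ E * t ^ p :=
    one_le_mul_of_one_le_of_one_le (one_le_pow₀ ht) (Real.one_le_rpow ht hp)
  calc ∫ x in A, g x ∂μ ≤ (t ^ Module.finrank ℝ E * t ^ p) * ∫ x in A, g x ∂μ :=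
        le_mul_of_one_le_left (integral_nonneg hg0) hfactor
    _ = ∫ x in t • A, g x ∂μ := by
        rw [mul_assoc, hscale, ← mul_assoc, mul_inv_cancel₀ (by positivity), one_mul]

theorem setIntegral_le_setIntegral_measure_rpow_smul {E : Type*} [NormedAddCommGroup E]
    [NormedSpace ℝ E] [FiniteDimensional ℝ E] [MeasurableSpace E] [BorelSpace E]
    (μ : Measure E) [μ.IsAddHaarMeasure] {g : E → ℝ} {p : ℝ} (hp : 0 ≤ p)
    (hg0 : ∀ x, 0 ≤ g x) (hg : ∀ t : ℝ, 0 < t → ∀ x, g (t • x) = t ^ p * g x)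
    {A : Set E} (hA : μ A ≤ 1) (n : ℕ) :
    ∫ x in A, g x ∂μ ≤ ∫ x in ((μ A).toReal ^ (-(1 : ℝ) / n)) • A, g x ∂μ := by
  rcases eq_or_ne (μ A) 0 with hA0 | hA0
  · rw [setIntegral_measure_zero _ hA0]
    exact integral_nonneg hg0
  have ht : 1 ≤ (μ A).toReal ^ (-(1 : ℝ) / n) :=
    Real.one_le_rpow_of_pos_of_le_one_of_nonpos
      (ENNReal.toReal_pos hA0 (ne_top_of_le_ne_top ENNReal.one_ne_top hA))
      (ENNReal.toReal_le_of_le_ofReal zero_le_one (hA.trans_eq ENNReal.ofReal_one.symm))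
      (div_nonpos_of_nonpos_of_nonneg (by norm_num) n.cast_nonneg)
  exact setIntegral_le_setIntegral_smul_of_homogeneous μ hp ht hg0
    (hg _ (zero_lt_one.trans_le ht)) A

theorem stmt4_general (n : ℕ) (K A : Set (EuclideanSpace ℝ (Fin n)))
    (hKcomp : IsCompact K)
    (hKvol : volume K = 1) (hAK : A ⊆ K) (hAmeas : MeasurableSet A)
    (θ : EuclideanSpace ℝ (Fin n))
    (p : ℝ) (hp : 1 ≤ p) (M : ℝ) (hM : 0 < M)
    (hRH : (∫ x in K, |⟪x, θ⟫| ^ (2 * p)) ^ (1 / (2 * p))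
            ≤ M * (∫ x in K, |⟪x, θ⟫| ^ p) ^ (1 / p))
    (hsmall : volume (K \ A) ≤ ENNReal.ofReal (((2 * M ^ p)⁻¹) ^ 2 * (1 / 4))) :
    ∫ x in K, |⟪x, θ⟫| ^ p
      ≤ 2 * ∫ x in ((volume A).toReal ^ (-(1 : ℝ) / n)) • A, |⟪x, θ⟫| ^ p := by
  have hp0 : 0 < p := zero_lt_one.trans_le hp
  set f : EuclideanSpace ℝ (Fin n) → ℝ := fun x => |⟪x, θ⟫| ^ p with hf_def
  have hf0 : ∀ x, 0 ≤ f x := fun x => Real.rpow_nonneg (abs_nonneg _) p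
  have hf_hom : ∀ t : ℝ, 0 < t → ∀ x, f (t • x) = t ^ p * f x := fun t ht x => by
    simp only [hf_def, real_inner_smul_left, abs_mul, abs_of_pos ht,
      Real.mul_rpow ht.le (abs_nonneg _)]
  have hf_cont : Continuous f :=
    (continuous_id.inner continuous_const).abs.rpow_const fun _ => Or.inr hp0.le
  have hf_sq : ∀ x, |⟪x, θ⟫| ^ (2 * p) = f x ^ 2 := fun x => by
    rw [← Real.rpow_natCast, ← Real.rpow_mul (abs_nonneg _), mul_comm]; norm_num
  have hfK : MemLp f 2 (volume.restrict K) :=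
    (memLp_two_iff_integrable_sq hf_cont.aestronglyMeasurable).2
      ((hf_cont.pow 2).continuousOn.integrableOn_compact hKcomp)
  have hRH' : √(∫ x in K, f x ^ 2) ≤ M ^ p * ∫ x in K, f x := by
    simp only [hf_sq] at hRH
    exact sqrt_le_rpow_mul_of_rpow_inv_two_mul_le (integral_nonneg fun x => sq_nonneg _)
      (integral_nonneg hf0) hM.le hp0 hRH
  have hKA : ∫ x in K, f x ≤ 2 * ∫ x in A, f x :=
    setIntegral_le_two_mul_setIntegral_of_sqrt_le (Real.rpow_pos_of_pos hM p)
      (hKvol ▸ ENNReal.one_ne_top) hAmeas.nullMeasurableSet hAK hf0 hfK hRH'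
      ((ENNReal.toReal_le_of_le_ofReal (by positivity) hsmall).trans_eq (by ring))
  have hA_scaled := setIntegral_le_setIntegral_measure_rpow_smul volume hp0.le hf0 hf_hom
    (hKvol ▸ measure_mono hAK) n
  linarith

/-- Suppose that for a convex body `K` of volume 1 in `ℝⁿ`, a subset `A ⊆ K`, a direction
`θ ∈ S^{n-1}` and an exponent `p ≥ 1` one has
`(∫_K |⟨x,θ⟩|^(2p))^(1/(2p)) ≤ M (∫_K |⟨x,θ⟩|^p)^(1/p)` for some `M > 0`, and
`|K \ A| ≤ (2M^p)^(-2) · (1/4)`. Then `∫_K |⟨x,θ⟩|^p ≤ 2 ∫_{Ā} |⟨x,θ⟩|^p`,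
where `Ā = |A|^(-1/n) • A`. -/
theorem stmt4 (n : ℕ) (K A : Set (EuclideanSpace ℝ (Fin n)))
    (hKcomp : IsCompact K) (hKconv : Convex ℝ K) (hKint : (interior K).Nonempty)
    (hKvol : volume K = 1) (hAK : A ⊆ K) (hAmeas : MeasurableSet A)
    (θ : EuclideanSpace ℝ (Fin n)) (hθ : ‖θ‖ = 1)
    (p : ℝ) (hp : 1 ≤ p) (M : ℝ) (hM : 0 < M)
    (hRH : (∫ x in K, |⟪x, θ⟫| ^ (2 * p)) ^ (1 / (2 * p))
            ≤ M * (∫ x in K, |⟪x, θ⟫| ^ p) ^ (1 / p))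
    (hsmall : volume (K \ A) ≤ ENNReal.ofReal (((2 * M ^ p)⁻¹) ^ 2 * (1 / 4))) :
    ∫ x in K, |⟪x, θ⟫| ^ p
      ≤ 2 * ∫ x in ((volume A).toReal ^ (-(1 : ℝ) / n)) • A, |⟪x, θ⟫| ^ p :=
  stmt4_general n K A hKcomp hKvol hAK hAmeas θ p hp M hM hRH hsmall
end

section
/- Let K be a centered convex body of volume 1 in ℝ^n and 2 ≤ q ≤ n. Then (∫_{O(n)} I_1^q(K, Z_q^∘(U(K))) dν(U))^{1/q} ≤ c_{n,q} · I_q(K)^2, where c_{n,q} = (∫_{S^{n-1}} |⟨e_1,θ⟩|^q dσ(θ))^{1/q}, I_q(K) = (∫_K ‖x‖_2^q dx)^{1/q}, and I_1(K, Z_q^∘(M)) = ∫_K (∫_M |⟨x,y⟩|^q dy)^{1/q} dx. -/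
/-!
For fixed `x, y`, the average `∫ |⟪x, U y⟫| ^ q dν(U)` depends only on `‖x‖` and `‖y‖`: left
invariance of `ν` moves `x`, the right invariance that left invariance forces on a probability
measure moves `y`, and `O(n)` acts transitively on spheres. Homogeneity turns it into
`‖x‖ ^ q * ‖y‖ ^ q` times its value at a unit vector `e`, which Fubini against the rotation-invariant
`σ` identifies with `c_{n,q} ^ q`. For each `U`, Jensen's inequality on the probability space `K`
bounds `I₁(K, Z_q°(UK)) ^ q` by `∫_K ∫_K |⟪x, U y⟫| ^ q`, and averaging over `U` gives
`c_{n,q} ^ q * I_q(K) ^ (2q)`.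
-/

open MeasureTheory
open scoped RealInnerProductSpace

noncomputable instance stmt5.instMS (n : ℕ) :
    MeasurableSpace (Matrix.orthogonalGroup (Fin n) ℝ) := borel _

namespace MeasureTheory.Measure

variable {G : Type*} [Group G] [MeasurableSpace G] [MeasurableMul₂ G] [MeasurableInv G]

theorem isInvInvariant_of_isMulLeftInvariant (μ : Measure G) [IsProbabilityMeasure μ]
    [μ.IsMulLeftInvariant] : μ.IsInvInvariant := by
  constructor
  -- `(x, y) ↦ (y * x, x⁻¹)` preserves `μ.prod μ`, and its second coordinate is `x⁻¹`.
  calc μ.inv = map Inv.inv (map Prod.fst (μ.prod μ)) := by simp [Measure.inv]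
    _ = map Prod.snd (map (fun z : G × G => (z.2 * z.1, z.1⁻¹)) (μ.prod μ)) := by
      rw [map_map measurable_inv measurable_fst, map_map measurable_snd (by fun_prop)]
      rfl
    _ = μ := by rw [(measurePreserving_mul_prod_inv μ μ).map_eq, map_snd_prod]; simp

theorem isMulRightInvariant_of_isMulLeftInvariant (μ : Measure G) [IsProbabilityMeasure μ]
    [μ.IsMulLeftInvariant] : μ.IsMulRightInvariant := by
  have := isInvInvariant_of_isMulLeftInvariant μ
  rw [← μ.inv_eq_self]
  infer_instance

end MeasureTheory.Measure

section Jensen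

variable {α β : Type*} [MeasurableSpace α] [MeasurableSpace β]
  {μ : Measure α} [IsProbabilityMeasure μ] {q : ℝ}

theorem rpow_integral_rpow_inv_le_integral (hq : 1 ≤ q) {h : α → ℝ} (h0 : ∀ a, 0 ≤ h a)
    (hint : Integrable h μ) : (∫ a, h a ^ (1 / q) ∂μ) ^ q ≤ ∫ a, h a ∂μ := by
  have hq0 : 0 < q := by positivity
  have hroot : Integrable (fun a => h a ^ (1 / q)) μ := by
    refine (hint.add (integrable_const 1)).mono'
      (hint.aemeasurable.pow_const _).aestronglyMeasurable (ae_of_all _ fun a => ?_)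
    rw [Real.norm_of_nonneg (Real.rpow_nonneg (h0 a) _), Pi.add_apply]
    rcases le_total (h a) 1 with ha | ha
    · linarith [Real.rpow_le_one (h0 a) ha (by positivity : 0 ≤ 1 / q), h0 a]
    · have := Real.rpow_le_rpow_of_exponent_le ha (div_le_one_of_le₀ hq hq0.le)
      rw [Real.rpow_one] at this
      linarith
  have hcancel (a : α) : (h a ^ (1 / q)) ^ q = h a := by
    rw [← Real.rpow_mul (h0 a), one_div_mul_cancel hq0.ne', Real.rpow_one]
  calc (∫ a, h a ^ (1 / q) ∂μ) ^ q ≤ ∫ a, (h a ^ (1 / q)) ^ q ∂μ :=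
        (convexOn_rpow hq).map_integral_le (Real.continuous_rpow_const hq0.le).continuousOn
          isClosed_Ici (ae_of_all _ fun a => Real.rpow_nonneg (h0 a) _) hroot
          (by simpa only [Function.comp_def, hcancel] using hint)
    _ = ∫ a, h a ∂μ := by simp_rw [hcancel]

theorem rpow_integral_rpow_inv_integral_le_integral_prod (hq : 1 ≤ q) {ρ : Measure β} [SFinite ρ]
    {F : α × β → ℝ} (hF0 : ∀ z, 0 ≤ F z) (hF : Integrable F (μ.prod ρ)) :
    (∫ x, (∫ y, F (x, y) ∂ρ) ^ (1 / q) ∂μ) ^ q ≤ ∫ z, F z ∂(μ.prod ρ) := by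
  rw [integral_prod F hF]
  exact rpow_integral_rpow_inv_le_integral hq (fun x => integral_nonneg fun y => hF0 _)
    hF.integral_prod_left

end Jensen

namespace Matrix

variable {𝕜 ι : Type*} [RCLike 𝕜] [Fintype ι] [DecidableEq ι]

noncomputable def unitaryGroupLinearIsometryEquiv :
    unitaryGroup ι 𝕜 ≃* (EuclideanSpace 𝕜 ι ≃ₗᵢ[𝕜] EuclideanSpace 𝕜 ι) :=
  (Unitary.mapEquiv (StarMulEquiv.ofClass (toEuclideanCLM (𝕜 := 𝕜) (n := ι)))).toMulEquiv.trans
    Unitary.linearIsometryEquiv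

theorem unitaryGroupLinearIsometryEquiv_apply (U : unitaryGroup ι 𝕜) (x : EuclideanSpace 𝕜 ι) :
    unitaryGroupLinearIsometryEquiv U x = toEuclideanLin (U : Matrix ι ι 𝕜) x :=
  rfl

theorem exists_orthogonalGroup_apply_eq {x y : EuclideanSpace ℝ ι} (h : ‖x‖ = ‖y‖) :
    ∃ W : orthogonalGroup ι ℝ, toEuclideanLin (W : Matrix ι ι ℝ) x = y := by
  obtain ⟨W, hW⟩ := unitaryGroupLinearIsometryEquiv.surjective (Submodule.reflection (ℝ ∙ (x - y))ᗮ)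
  exact ⟨W, by rw [← unitaryGroupLinearIsometryEquiv_apply, hW, Submodule.reflection_sub h]⟩

end Matrix

open Matrix

variable {n : ℕ}

instance : BorelSpace (orthogonalGroup (Fin n) ℝ) := ⟨rfl⟩

instance : SecondCountableTopology (orthogonalGroup (Fin n) ℝ) :=
  haveI : SecondCountableTopology (Matrix (Fin n) (Fin n) ℝ) :=
    inferInstanceAs (SecondCountableTopology (Fin n → Fin n → ℝ))
  TopologicalSpace.Subtype.secondCountableTopology _

theorem continuous_orthogonalGroup_toEuclideanLin :
    Continuous fun p : orthogonalGroup (Fin n) ℝ × EuclideanSpace ℝ (Fin n) =>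
      toEuclideanLin (p.1 : Matrix (Fin n) (Fin n) ℝ) p.2 := by
  simp only [toLpLin_apply]
  fun_prop

theorem integrable_abs_inner_rpow_prod {ν : Measure (orthogonalGroup (Fin n) ℝ)}
    [IsFiniteMeasure ν] {q : ℝ} (hq : 0 ≤ q) {μ : Measure (EuclideanSpace ℝ (Fin n))} [SFinite μ]
    (hμ : Integrable (fun x => ‖x‖ ^ q) μ) :
    Integrable (fun p : orthogonalGroup (Fin n) ℝ ×
        (EuclideanSpace ℝ (Fin n) × EuclideanSpace ℝ (Fin n)) =>
      |⟪p.2.1, toEuclideanLin (p.1 : Matrix (Fin n) (Fin n) ℝ) p.2.2⟫| ^ q)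
      (ν.prod (μ.prod μ)) := by
  refine ((integrable_const (1 : ℝ)).mul_prod (hμ.mul_prod hμ)).mono' ?_ (ae_of_all _ fun p => ?_)
  · refine Continuous.aestronglyMeasurable ?_
    exact ((continuous_snd.fst.inner (continuous_orthogonalGroup_toEuclideanLin.comp
      (continuous_fst.prodMk continuous_snd.snd))).abs).rpow_const fun _ => Or.inr hq
  · rw [Real.norm_of_nonneg (by positivity), one_mul, ← Real.mul_rpow (norm_nonneg _)
      (norm_nonneg _)]
    refine Real.rpow_le_rpow (abs_nonneg _) ((abs_real_inner_le_norm _ _).trans_eq ?_) hq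
    rw [← unitaryGroupLinearIsometryEquiv_apply, LinearIsometryEquiv.norm_map]

section Invariance

variable {ν : Measure (orthogonalGroup (Fin n) ℝ)} [IsProbabilityMeasure ν] [ν.IsMulLeftInvariant]

theorem integral_comp_inner_orthogonalGroup_eq_of_norm_eq (g : ℝ → ℝ)
    {x x' y y' : EuclideanSpace ℝ (Fin n)}
    (hx : ‖x‖ = ‖x'‖) (hy : ‖y‖ = ‖y'‖) :
    ∫ U, g ⟪x, toEuclideanLin (U : Matrix (Fin n) (Fin n) ℝ) y⟫ ∂ν
      = ∫ U, g ⟪x', toEuclideanLin (U : Matrix (Fin n) (Fin n) ℝ) y'⟫ ∂ν := by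
  have := ν.isMulRightInvariant_of_isMulLeftInvariant
  obtain ⟨A, rfl⟩ := exists_orthogonalGroup_apply_eq hx
  obtain ⟨B, rfl⟩ := exists_orthogonalGroup_apply_eq hy.symm
  simp only [← unitaryGroupLinearIsometryEquiv_apply] at *
  have key : ∀ U, ⟪x, unitaryGroupLinearIsometryEquiv U (unitaryGroupLinearIsometryEquiv B y')⟫
      = ⟪unitaryGroupLinearIsometryEquiv A x, unitaryGroupLinearIsometryEquiv (A * U * B) y'⟫ := by
    intro U
    simp only [map_mul, LinearIsometryEquiv.coe_mul, Function.comp_apply,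
      LinearIsometryEquiv.inner_map_map]
  simp_rw [key]
  rw [integral_mul_left_eq_self (fun V => g ⟪_, unitaryGroupLinearIsometryEquiv (V * B) y'⟫) A,
    integral_mul_right_eq_self (fun V => g ⟪_, unitaryGroupLinearIsometryEquiv V y'⟫) B]

theorem integral_abs_inner_rpow_orthogonalGroup (q : ℝ) {e : EuclideanSpace ℝ (Fin n)}
    (he : ‖e‖ = 1) (x y : EuclideanSpace ℝ (Fin n)) :
    ∫ U, |⟪x, toEuclideanLin (U : Matrix (Fin n) (Fin n) ℝ) y⟫| ^ q ∂ν
      = ‖x‖ ^ q * ‖y‖ ^ q * ∫ U, |⟪e, toEuclideanLin (U : Matrix (Fin n) (Fin n) ℝ) e⟫| ^ q ∂ν := by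
  rw [integral_comp_inner_orthogonalGroup_eq_of_norm_eq (fun t => |t| ^ q) (x' := ‖x‖ • e)
    (y' := ‖y‖ • e) (by simp [norm_smul, he]) (by simp [norm_smul, he]), ← integral_const_mul]
  congr 1 with U
  rw [map_smul, inner_smul_left, inner_smul_right, abs_mul, abs_mul, Real.mul_rpow (by positivity)
    (by positivity), Real.mul_rpow (by positivity) (by positivity)]
  simp [mul_assoc]

theorem ae_norm_eq_one_of_measure_sphere {σ : Measure (EuclideanSpace ℝ (Fin n))}
    [IsProbabilityMeasure σ] (hσ1 : σ (Metric.sphere 0 1) = 1) : ∀ᵐ θ ∂σ, ‖θ‖ = 1 := by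
  have hS : {θ : EuclideanSpace ℝ (Fin n) | ‖θ‖ = 1} = Metric.sphere 0 1 := by ext; simp
  rw [ae_iff_measure_eq (by rw [hS]; exact Metric.isClosed_sphere.nullMeasurableSet), hS, hσ1,
    measure_univ]

theorem integral_abs_inner_rpow_sphere_eq_orthogonalGroup {σ : Measure (EuclideanSpace ℝ (Fin n))}
    [IsProbabilityMeasure σ] (hσ1 : σ (Metric.sphere 0 1) = 1)
    (hσinv : ∀ U : orthogonalGroup (Fin n) ℝ,
      Measure.map (fun x => toEuclideanLin (U : Matrix (Fin n) (Fin n) ℝ) x) σ = σ)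
    {q : ℝ} (hq : 0 ≤ q) {e : EuclideanSpace ℝ (Fin n)} (he : ‖e‖ = 1) :
    ∫ θ, |⟪e, θ⟫| ^ q ∂σ
      = ∫ U, |⟪e, toEuclideanLin (U : Matrix (Fin n) (Fin n) ℝ) e⟫| ^ q ∂ν := by
  have hsph := ae_norm_eq_one_of_measure_sphere hσ1
  have hrot (U : orthogonalGroup (Fin n) ℝ) :
      ∫ θ, |⟪e, toEuclideanLin (U : Matrix (Fin n) (Fin n) ℝ) θ⟫| ^ q ∂σ
        = ∫ θ, |⟪e, θ⟫| ^ q ∂σ :=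
    MeasurePreserving.integral_comp ⟨by fun_prop, hσinv U⟩
      (unitaryGroupLinearIsometryEquiv U).toHomeomorph.measurableEmbedding (fun θ => |⟪e, θ⟫| ^ q)
  have hint : Integrable (fun p : orthogonalGroup (Fin n) ℝ × EuclideanSpace ℝ (Fin n) =>
      |⟪e, toEuclideanLin (p.1 : Matrix (Fin n) (Fin n) ℝ) p.2⟫| ^ q) (ν.prod σ) := by
    refine .of_bound (Continuous.aestronglyMeasurable ?_) 1
      (Measure.quasiMeasurePreserving_snd.ae hsph |>.mono fun p hp => ?_)
    · exact ((continuous_const.inner continuous_orthogonalGroup_toEuclideanLin).abs).rpow_const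
        fun _ => Or.inr hq
    · rw [Real.norm_of_nonneg (by positivity)]
      refine Real.rpow_le_one (abs_nonneg _) ?_ hq
      calc |⟪e, toEuclideanLin (p.1 : Matrix (Fin n) (Fin n) ℝ) p.2⟫|
          ≤ ‖e‖ * ‖toEuclideanLin (p.1 : Matrix (Fin n) (Fin n) ℝ) p.2‖ :=
            abs_real_inner_le_norm _ _
        _ = 1 := by
          rw [← unitaryGroupLinearIsometryEquiv_apply, LinearIsometryEquiv.norm_map, he, hp,
            one_mul]
  calc ∫ θ, |⟪e, θ⟫| ^ q ∂σ
      = ∫ U, ∫ θ, |⟪e, toEuclideanLin (U : Matrix (Fin n) (Fin n) ℝ) θ⟫| ^ q ∂σ ∂ν := by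
        simp [hrot]
    _ = ∫ θ, ∫ U, |⟪e, toEuclideanLin (U : Matrix (Fin n) (Fin n) ℝ) θ⟫| ^ q ∂ν ∂σ :=
        integral_integral_swap hint
    _ = ∫ θ, ∫ U, |⟪e, toEuclideanLin (U : Matrix (Fin n) (Fin n) ℝ) e⟫| ^ q ∂ν ∂σ :=
        integral_congr_ae <| hsph.mono fun θ hθ => integral_comp_inner_orthogonalGroup_eq_of_norm_eq
          (fun t => |t| ^ q) rfl (hθ.trans he.symm)
    _ = ∫ U, |⟪e, toEuclideanLin (U : Matrix (Fin n) (Fin n) ℝ) e⟫| ^ q ∂ν := by simp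

theorem integral_abs_inner_rpow_orthogonalGroup_eq_sphere {σ : Measure (EuclideanSpace ℝ (Fin n))}
    [IsProbabilityMeasure σ] (hσ1 : σ (Metric.sphere 0 1) = 1)
    (hσinv : ∀ U : orthogonalGroup (Fin n) ℝ,
      Measure.map (fun x => toEuclideanLin (U : Matrix (Fin n) (Fin n) ℝ) x) σ = σ)
    {q : ℝ} (hq : 0 ≤ q) {e : EuclideanSpace ℝ (Fin n)} (he : ‖e‖ = 1)
    (x y : EuclideanSpace ℝ (Fin n)) :
    ∫ U, |⟪x, toEuclideanLin (U : Matrix (Fin n) (Fin n) ℝ) y⟫| ^ q ∂ν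
      = ‖x‖ ^ q * ‖y‖ ^ q * ∫ θ, |⟪e, θ⟫| ^ q ∂σ := by
  rw [integral_abs_inner_rpow_orthogonalGroup q he,
    integral_abs_inner_rpow_sphere_eq_orthogonalGroup (ν := ν) hσ1 hσinv hq he]

theorem integral_integral_prod_abs_inner_rpow {σ : Measure (EuclideanSpace ℝ (Fin n))}
    [IsProbabilityMeasure σ] (hσ1 : σ (Metric.sphere 0 1) = 1)
    (hσinv : ∀ U : orthogonalGroup (Fin n) ℝ,
      Measure.map (fun x => toEuclideanLin (U : Matrix (Fin n) (Fin n) ℝ) x) σ = σ)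
    {q : ℝ} (hq : 0 ≤ q) {e : EuclideanSpace ℝ (Fin n)} (he : ‖e‖ = 1)
    {μ : Measure (EuclideanSpace ℝ (Fin n))} [SFinite μ] (hμ : Integrable (fun x => ‖x‖ ^ q) μ) :
    ∫ U, ∫ z, |⟪z.1, toEuclideanLin (U : Matrix (Fin n) (Fin n) ℝ) z.2⟫| ^ q ∂(μ.prod μ) ∂ν
      = (∫ θ, |⟪e, θ⟫| ^ q ∂σ) * (∫ x, ‖x‖ ^ q ∂μ) ^ 2 := by
  rw [integral_integral_swap (integrable_abs_inner_rpow_prod hq hμ)]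
  simp_rw [integral_abs_inner_rpow_orthogonalGroup_eq_sphere hσ1 hσinv hq he]
  rw [integral_mul_const, integral_prod_mul (fun x => ‖x‖ ^ q) (fun y => ‖y‖ ^ q)]
  ring

end Invariance

theorem stmt5_general (n : ℕ) (hn : 0 < n) (K : Set (EuclideanSpace ℝ (Fin n)))
    (hKcomp : IsCompact K)
    (hKvol : volume K = 1)
    (q : ℝ) (hq2 : 2 ≤ q)
    (ν : Measure (Matrix.orthogonalGroup (Fin n) ℝ)) [IsProbabilityMeasure ν]
    (hν : ∀ U : Matrix.orthogonalGroup (Fin n) ℝ,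
      Measure.map (fun V => U * V) ν = ν)
    (σ : Measure (EuclideanSpace ℝ (Fin n))) [IsProbabilityMeasure σ]
    (hσ1 : σ (Metric.sphere (0 : EuclideanSpace ℝ (Fin n)) 1) = 1)
    (hσinv : ∀ U : Matrix.orthogonalGroup (Fin n) ℝ,
      Measure.map (fun x => Matrix.toEuclideanLin (U : Matrix (Fin n) (Fin n) ℝ) x) σ = σ) :
    (∫ U, (∫ x in K,
        (∫ y in K, |⟪x, Matrix.toEuclideanLin ((U : Matrix (Fin n) (Fin n) ℝ)) y⟫| ^ q)
          ^ (1 / q)) ^ q ∂ν) ^ (1 / q)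
      ≤ (∫ θ, |⟪EuclideanSpace.single (⟨0, hn⟩ : Fin n) (1 : ℝ), θ⟫| ^ q ∂σ) ^ (1 / q) *
        ((∫ x in K, ‖x‖ ^ q) ^ (1 / q)) ^ 2 := by
  have hq1 : 1 ≤ q := by linarith
  have hq0 : 0 ≤ q := by linarith
  have hKprob : IsProbabilityMeasure (volume.restrict K) := ⟨by simp [hKvol]⟩
  have hνinv : ν.IsMulLeftInvariant := ⟨hν⟩
  have hnorm : Integrable (fun x => ‖x‖ ^ q) (volume.restrict K) :=
    (continuous_norm.rpow_const fun _ => Or.inr hq0).continuousOn.integrableOn_compact hKcomp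
  have hint := integrable_abs_inner_rpow_prod (ν := ν) hq0 hnorm
  have hmean : ∫ U, (∫ x in K,
        (∫ y in K, |⟪x, Matrix.toEuclideanLin ((U : Matrix (Fin n) (Fin n) ℝ)) y⟫| ^ q)
          ^ (1 / q)) ^ q ∂ν
      ≤ (∫ θ, |⟪EuclideanSpace.single (⟨0, hn⟩ : Fin n) (1 : ℝ), θ⟫| ^ q ∂σ) *
        (∫ x in K, ‖x‖ ^ q) ^ 2 := by
    rw [← integral_integral_prod_abs_inner_rpow (ν := ν) hσ1 hσinv hq0 (by simp) hnorm]
    refine integral_mono_of_nonneg (ae_of_all _ fun U => by positivity) hint.integral_prod_left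
      (hint.prod_right_ae.mono fun U hU => ?_)
    exact rpow_integral_rpow_inv_integral_le_integral_prod hq1 (fun _ => by positivity) hU
  calc _ ≤ ((∫ θ, |⟪EuclideanSpace.single (⟨0, hn⟩ : Fin n) (1 : ℝ), θ⟫| ^ q ∂σ) *
        (∫ x in K, ‖x‖ ^ q) ^ 2) ^ (1 / q) :=
        Real.rpow_le_rpow (integral_nonneg fun U => by positivity) hmean (by positivity)
    _ = _ := by
      rw [Real.mul_rpow (integral_nonneg fun θ => by positivity) (by positivity),
        Real.rpow_pow_comm (integral_nonneg fun x => by positivity)]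

/-- Let `K` be a centered convex body of volume 1 in `ℝⁿ` and `2 ≤ q ≤ n`. Then
`(∫_{O(n)} I₁^q(K, Z_q°(U(K))) dν(U))^(1/q) ≤ c_{n,q} · I_q(K)²`, where
`c_{n,q} = (∫_{S^{n-1}} |⟨e₁,θ⟩|^q dσ(θ))^(1/q)`, `I_q(K) = (∫_K ‖x‖₂^q dx)^(1/q)`
and `I₁(K, Z_q°(U(K))) = ∫_K (∫_K |⟨x,Uy⟩|^q dy)^(1/q) dx`. -/
theorem stmt5 (n : ℕ) (hn : 0 < n) (K : Set (EuclideanSpace ℝ (Fin n)))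
    (hKcomp : IsCompact K) (hKconv : Convex ℝ K) (hKint : (interior K).Nonempty)
    (hKvol : volume K = 1) (hKcen : ∫ x in K, x = 0)
    (q : ℝ) (hq2 : 2 ≤ q) (hqn : q ≤ n)
    (ν : Measure (Matrix.orthogonalGroup (Fin n) ℝ)) [IsProbabilityMeasure ν]
    (hν : ∀ U : Matrix.orthogonalGroup (Fin n) ℝ,
      Measure.map (fun V => U * V) ν = ν)
    (σ : Measure (EuclideanSpace ℝ (Fin n))) [IsProbabilityMeasure σ]
    (hσ1 : σ (Metric.sphere (0 : EuclideanSpace ℝ (Fin n)) 1) = 1)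
    (hσinv : ∀ U : Matrix.orthogonalGroup (Fin n) ℝ,
      Measure.map (fun x => Matrix.toEuclideanLin (U : Matrix (Fin n) (Fin n) ℝ) x) σ = σ) :
    (∫ U, (∫ x in K,
        (∫ y in K, |⟪x, Matrix.toEuclideanLin ((U : Matrix (Fin n) (Fin n) ℝ)) y⟫| ^ q)
          ^ (1 / q)) ^ q ∂ν) ^ (1 / q)
      ≤ (∫ θ, |⟪EuclideanSpace.single (⟨0, hn⟩ : Fin n) (1 : ℝ), θ⟫| ^ q ∂σ) ^ (1 / q) *
        ((∫ x in K, ‖x‖ ^ q) ^ (1 / q)) ^ 2 :=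
  stmt5_general n hn K hKcomp hKvol q hq2 ν hν σ hσ1 hσinv
end

section
/- Let ℰ = T(B_2^{2m}) be an ellipsoid in ℝ^{2m} with eigenvalues λ_1 ≥ … ≥ λ_{2m} > 0 of √(T*T). Then there exists an m-dimensional subspace F_0 such that the orthogonal projection of ℰ onto F_0 equals λ_m · (B_2^{2m} ∩ F_0), i.e. P_{F_0}(ℰ) is a Euclidean ball of radius λ_m in F_0. -/
/-! If `f*` is `μ` times an isometry on a subspace `K`, then `P_K ∘ f` maps the unit ball onto
the ball of radius `μ` in `K`: `‖P_K f x‖² = ⟪f* P_K f x, x⟫ ≤ μ ‖P_K f x‖ ‖x‖`, and `μ z` is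
the image of `μ⁻¹ f* z`. For `T` such a `K` of dimension `m` is spanned by the vectors
`cos θₖ uₖ + sin θₖ u_{2m+1-k}`, `k ≤ m`, where the `uᵢ = λᵢ⁻¹ T vᵢ` are left singular vectors of
`T` and `θₖ` is chosen with `cos² θₖ λₖ² + sin² θₖ λ_{2m+1-k}² = λₘ²`, which is possible because
`λ_{2m+1-k} ≤ λₘ ≤ λₖ`. -/

open Matrix
open scoped Pointwise RealInnerProductSpace
open LinearMap (adjoint)

section

variable {E E' : Type*} [NormedAddCommGroup E] [InnerProductSpace ℝ E]
  [NormedAddCommGroup E'] [InnerProductSpace ℝ E']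

theorem Orthonormal.inner_smul_add_smul {ι : Type*} [DecidableEq ι] {u : ι → E}
    (hu : Orthonormal ℝ u) {a b a' b' : ι} (hab' : a ≠ b') (hba' : b ≠ a') (c s c' s' : ℝ) :
    ⟪c • u a + s • u b, c' • u a' + s' • u b'⟫ =
      (if a = a' then c * c' else 0) + (if b = b' then s * s' else 0) := by
  simp only [inner_add_left, inner_add_right, real_inner_smul_left, real_inner_smul_right,
    orthonormal_iff_ite.mp hu, hab', hba', if_false]
  split_ifs <;> ring

theorem LinearMap.inner_map_map_of_mem_span {ι : Type*} [Fintype ι] (g : E' →ₗ[ℝ] E)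
    {w : ι → E'} {c : ℝ} (h : ∀ i j, ⟪g (w i), g (w j)⟫ = c * ⟪w i, w j⟫) :
    ∀ z ∈ Submodule.span ℝ (Set.range w), ∀ y ∈ Submodule.span ℝ (Set.range w),
      ⟪g z, g y⟫ = c * ⟪z, y⟫ := by
  intro z hz y hy
  obtain ⟨a, rfl⟩ := (Submodule.mem_span_range_iff_exists_fun ℝ).mp hz
  obtain ⟨b, rfl⟩ := (Submodule.mem_span_range_iff_exists_fun ℝ).mp hy
  simp only [map_sum, map_smul, sum_inner, inner_sum, real_inner_smul_left,
    real_inner_smul_right, h, Finset.mul_sum]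
  exact Finset.sum_congr rfl fun _ _ => Finset.sum_congr rfl fun _ _ => by ring

theorem exists_cos_sq_mul_add_sin_sq_mul_eq {a b x : ℝ} (hb : b ≤ x) (ha : x ≤ a) :
    ∃ θ, Real.cos θ ^ 2 * a + Real.sin θ ^ 2 * b = x := by
  have hcont : ContinuousOn (fun θ => Real.cos θ ^ 2 * a + Real.sin θ ^ 2 * b)
      (Set.Icc 0 (Real.pi / 2)) := by fun_prop
  obtain ⟨θ, -, hθ⟩ := intermediate_value_Icc' (by positivity) hcont
    (by simpa using And.intro hb ha)
  exact ⟨θ, hθ⟩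

variable [FiniteDimensional ℝ E] [FiniteDimensional ℝ E']

theorem exists_orthonormal_adjoint_apply_eq_smul {ι : Type*} {v : ι → E}
    (hv : Orthonormal ℝ v) (f : E →ₗ[ℝ] E') {σ : ι → ℝ} (hσ : ∀ i, 0 < σ i)
    (hf : ∀ i, adjoint f (f (v i)) = σ i ^ 2 • v i) :
    ∃ u : ι → E', Orthonormal ℝ u ∧ ∀ i, adjoint f (u i) = σ i • v i := by
  classical
  refine ⟨fun i => (σ i)⁻¹ • f (v i), orthonormal_iff_ite.mpr fun i j => ?_, fun i => ?_⟩
  · rw [real_inner_smul_left, real_inner_smul_right, ← LinearMap.adjoint_inner_right, hf,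
      real_inner_smul_right, orthonormal_iff_ite.mp hv]
    split_ifs with h
    · subst h; field_simp [(hσ i).ne']
    · simp
  · rw [map_smul, hf, smul_smul]
    congr 1
    field_simp [(hσ i).ne']

theorem Submodule.coe_orthogonalProjectionOnto_image_image_closedBall (f : E →ₗ[ℝ] E')
    (K : Submodule ℝ E') {μ : ℝ} (hμ : 0 < μ)
    (hK : ∀ z ∈ K, ∀ y ∈ K, ⟪adjoint f z, adjoint f y⟫ = μ ^ 2 * ⟪z, y⟫) :
    ((↑) : K → E') '' (K.orthogonalProjectionOnto '' (f '' Metric.closedBall 0 1)) =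
      μ • (Metric.closedBall 0 1 ∩ (K : Set E')) := by
  have hnorm : ∀ z ∈ K, ‖adjoint f z‖ = μ * ‖z‖ := fun z hz => by
    rw [← sq_eq_sq₀ (norm_nonneg _) (by positivity), mul_pow, ← real_inner_self_eq_norm_sq,
      ← real_inner_self_eq_norm_sq, hK z hz z hz]
  ext y
  constructor
  · rintro ⟨_, ⟨_, ⟨x, hx, rfl⟩, rfl⟩, rfl⟩
    rw [mem_closedBall_zero_iff] at hx
    set p := K.orthogonalProjectionOnto (f x)
    have hp : ‖(p : E')‖ ^ 2 ≤ μ * ‖(p : E')‖ :=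
      calc ‖(p : E')‖ ^ 2 = ⟪(p : E'), f x⟫ := by
            rw [← real_inner_self_eq_norm_sq, ← Submodule.coe_inner]
            exact Submodule.inner_orthogonalProjectionOnto_eq_of_mem_left p (f x)
        _ = ⟪adjoint f p, x⟫ := by
            rw [real_inner_comm, ← LinearMap.adjoint_inner_right, real_inner_comm]
        _ ≤ ‖adjoint f p‖ * ‖x‖ := real_inner_le_norm _ _
        _ ≤ μ * ‖(p : E')‖ := by
            rw [hnorm p p.2]
            exact mul_le_of_le_one_right (by positivity) hx
    refine ⟨μ⁻¹ • (p : E'), ⟨?_, K.smul_mem _ p.2⟩, smul_inv_smul₀ hμ.ne' _⟩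
    rw [mem_closedBall_zero_iff, norm_smul, Real.norm_of_nonneg (inv_nonneg.mpr hμ.le)]
    exact inv_mul_le_one_of_le₀ (by nlinarith [norm_nonneg (p : E')]) hμ.le
  · rintro ⟨z, ⟨hz, hzK⟩, rfl⟩
    rw [mem_closedBall_zero_iff] at hz
    refine ⟨_, ⟨_, ⟨μ⁻¹ • adjoint f z, ?_, rfl⟩, rfl⟩, ?_⟩
    · rw [mem_closedBall_zero_iff, norm_smul, Real.norm_of_nonneg (inv_nonneg.mpr hμ.le),
        hnorm z hzK, inv_mul_cancel_left₀ hμ.ne']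
      exact hz
    · rw [Submodule.coe_orthogonalProjectionOnto_apply]
      refine Submodule.eq_starProjection_of_mem_of_inner_eq_zero (K.smul_mem μ hzK) fun y hy => ?_
      rw [inner_sub_left, ← LinearMap.adjoint_inner_right, real_inner_smul_left,
        real_inner_smul_left, hK z hzK y hy]
      field_simp
      ring

theorem exists_finrank_eq_card_inner_adjoint_eq {ι κ : Type*} [Fintype κ] (f : E →ₗ[ℝ] E')
    {v : ι → E} (hv : Orthonormal ℝ v) {σ : ι → ℝ} (hσ : ∀ i, 0 < σ i)
    (hf : ∀ i, adjoint f (f (v i)) = σ i ^ 2 • v i) {p q : κ → ι}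
    (hp : Function.Injective p) (hq : Function.Injective q) (hpq : ∀ k l, p k ≠ q l) {μ : ℝ}
    (hμ : ∀ k, σ (q k) ≤ μ ∧ μ ≤ σ (p k)) :
    ∃ K : Submodule ℝ E', Module.finrank ℝ K = Fintype.card κ ∧
      ∀ z ∈ K, ∀ y ∈ K, ⟪adjoint f z, adjoint f y⟫ = μ ^ 2 * ⟪z, y⟫ := by
  classical
  obtain ⟨u, hu, hfu⟩ := exists_orthonormal_adjoint_apply_eq_smul hv f hσ hf
  have hsq : ∀ k, σ (q k) ^ 2 ≤ μ ^ 2 ∧ μ ^ 2 ≤ σ (p k) ^ 2 := fun k =>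
    ⟨pow_le_pow_left₀ (hσ _).le (hμ k).1 2,
      pow_le_pow_left₀ ((hσ _).le.trans (hμ k).1) (hμ k).2 2⟩
  choose θ hθ using fun k => exists_cos_sq_mul_add_sin_sq_mul_eq (hsq k).1 (hsq k).2
  set w : κ → E' := fun k => Real.cos (θ k) • u (p k) + Real.sin (θ k) • u (q k)
  have hw : ∀ k l, ⟪w k, w l⟫ = if k = l then 1 else 0 := fun k l => by
    rw [hu.inner_smul_add_smul (hpq k l) (hpq l k).symm, hp.eq_iff, hq.eq_iff]
    split_ifs with h
    · subst h; nlinarith [Real.cos_sq_add_sin_sq (θ k)]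
    · ring
  have hfw : ∀ k, adjoint f (w k) =
      (Real.cos (θ k) * σ (p k)) • v (p k) + (Real.sin (θ k) * σ (q k)) • v (q k) := fun k => by
    simp only [w, map_add, map_smul, hfu, smul_smul]
  have hfww : ∀ k l, ⟪adjoint f (w k), adjoint f (w l)⟫ = μ ^ 2 * ⟪w k, w l⟫ := fun k l => by
    rw [hfw, hfw, hv.inner_smul_add_smul (hpq k l) (hpq l k).symm, hp.eq_iff, hq.eq_iff, hw]
    split_ifs with h
    · subst h; linear_combination hθ k
    · ring
  refine ⟨Submodule.span ℝ (Set.range w), ?_, LinearMap.inner_map_map_of_mem_span _ hfww⟩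
  exact finrank_span_eq_card (orthonormal_iff_ite.mpr hw).linearIndependent

end

theorem Matrix.IsHermitian.adjoint_toEuclideanLin_apply_eigenvectorBasis {n : Type*} [Fintype n]
    [DecidableEq n] {T : Matrix n n ℝ} (h : (Tᵀ * T).IsHermitian) (i : n) :
    adjoint (toEuclideanLin T) (toEuclideanLin T (h.eigenvectorBasis i)) =
      h.eigenvalues i • h.eigenvectorBasis i := by
  have hadj : adjoint (toEuclideanLin T) = toEuclideanLin Tᵀ := by
    rw [← toEuclideanLin_conjTranspose_eq_adjoint, conjTranspose_eq_transpose_of_trivial]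
  apply WithLp.ofLp_injective
  rw [hadj, ofLp_toLpLin, ofLp_toLpLin, toLin'_apply, toLin'_apply, mulVec_mulVec,
    h.mulVec_eigenvectorBasis, WithLp.ofLp_smul]

theorem Matrix.exists_finrank_eq_inner_adjoint_toEuclideanLin_eq {m : ℕ}
    {T : Matrix (Fin (2 * m)) (Fin (2 * m)) ℝ} (hherm : (Tᵀ * T).IsHermitian)
    {lam : Fin (2 * m) → ℝ} (hmono : Antitone lam) (hpos : ∀ i, 0 < lam i)
    (heig : ∃ σ : Equiv.Perm (Fin (2 * m)), ∀ i, lam i ^ 2 = hherm.eigenvalues (σ i))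
    {i : Fin (2 * m)} (hi : (i : ℕ) + 1 = m) :
    ∃ K : Submodule ℝ (EuclideanSpace ℝ (Fin (2 * m))), Module.finrank ℝ K = m ∧
      ∀ z ∈ K, ∀ y ∈ K, ⟪adjoint (toEuclideanLin T) z, adjoint (toEuclideanLin T) y⟫ =
        lam i ^ 2 * ⟪z, y⟫ := by
  obtain ⟨σ, hσ⟩ := heig
  set v := hherm.eigenvectorBasis.reindex σ.symm
  have hf : ∀ j, adjoint (toEuclideanLin T) (toEuclideanLin T (v j)) = lam j ^ 2 • v j :=
    fun j => by
      rw [OrthonormalBasis.reindex_apply, Equiv.symm_symm, hσ,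
        hherm.adjoint_toEuclideanLin_apply_eigenvectorBasis]
  have hmn : m ≤ 2 * m := by omega
  have hμ : ∀ k : Fin m, lam (Fin.castLE hmn k).rev ≤ lam i ∧ lam i ≤ lam (Fin.castLE hmn k) :=
    fun k => ⟨hmono (by rw [Fin.le_def, Fin.val_rev, Fin.val_castLE]; omega),
      hmono (by rw [Fin.le_def, Fin.val_castLE]; omega)⟩
  simpa using exists_finrank_eq_card_inner_adjoint_eq (toEuclideanLin T)
    v.orthonormal hpos hf (Fin.castLE_injective hmn)
    (Fin.rev_injective.comp (Fin.castLE_injective hmn))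
    (fun k l => Fin.ne_of_val_ne (by
      simp only [Function.comp_apply, Fin.val_rev, Fin.val_castLE]; omega)) hμ

set_option synthInstance.maxHeartbeats 400000 in
/-- Let `ℰ = T(B₂^{2m})` be an ellipsoid in `ℝ^{2m}` with eigenvalues
`λ₁ ≥ … ≥ λ_{2m} > 0` of `√(TᵀT)`. Then there exists an `m`-dimensional subspace `F₀`
such that the orthogonal projection of `ℰ` onto `F₀` equals `λ_m · (B₂^{2m} ∩ F₀)`. -/
theorem stmt14 (m : ℕ) (hm : 0 < m)
    (T : Matrix (Fin (2 * m)) (Fin (2 * m)) ℝ)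
    (hherm : (Tᵀ * T).IsHermitian)
    (lam : Fin (2 * m) → ℝ) (hmono : Antitone lam) (hpos : ∀ i, 0 < lam i)
    (heig : ∃ σ : Equiv.Perm (Fin (2 * m)), ∀ i, lam i ^ 2 = hherm.eigenvalues (σ i)) :
    ∃ F₀ : Submodule ℝ (EuclideanSpace ℝ (Fin (2 * m))), Module.finrank ℝ F₀ = m ∧
      ((↑) : F₀ → EuclideanSpace ℝ (Fin (2 * m))) ''
          ((F₀.orthogonalProjectionOnto) '' (Matrix.toEuclideanLin T '' Metric.closedBall 0 1))
        = lam (⟨m - 1, by omega⟩ : Fin (2 * m)) •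
            (Metric.closedBall (0 : EuclideanSpace ℝ (Fin (2 * m))) 1 ∩ (F₀ : Set _)) := by
  obtain ⟨K, hKdim, hK⟩ :=
    exists_finrank_eq_inner_adjoint_toEuclideanLin_eq hherm hmono hpos heig
      (i := ⟨m - 1, by omega⟩) (Nat.sub_add_cancel hm)
  exact ⟨K, hKdim, K.coe_orthogonalProjectionOnto_image_image_closedBall _ (hpos _) hK⟩
end
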